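/- arXiv:1403.1243 — 2 statements merged into one kernel-verified Lean document; each statement's English description precedes it below -/
import Mathlib

section
/- For every Hermitian nonnegative definite T×T matrix R and all λ, λ′ ∈ ℝ, |d_T(λ)^H R d_T(λ) − d_T(λ′)^H R d_T(λ′)| ≤ (2/√3) ‖R‖ T |λ − λ′|, where d_T(λ) = T^{−1/2}(1, e^{−iλ}, …, e^{−i(T−1)λ})^T. In particular, |E Υ̂ᵇ_T(λ) − E Υ̂ᵇ_T(λ′)| ≤ (2/√3) ‖R_T‖ T |λ − λ′|. -/
open Matrix
open scoped ComplexOrder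

noncomputable section

/-- Spectral (L2 operator) norm of a square complex matrix. -/
def specNorm {n : ℕ} (A : Matrix (Fin n) (Fin n) ℂ) : ℝ :=
  ‖Matrix.toEuclideanCLM (𝕜 := ℂ) A‖

/-- The vector `d_T(λ) = T^{-1/2}(1, e^{-iλ}, …, e^{-i(T-1)λ})ᵀ`. -/
def dT (T : ℕ) (lam : ℝ) : Fin T → ℂ :=
  fun t => (1 / (Real.sqrt T : ℂ)) * Complex.exp (-(Complex.I * t * lam))

end

/-!
Read `star v ⬝ᵥ R *ᵥ v` as `⟪v, R v⟫` in `EuclideanSpace ℂ (Fin T)`. Splitting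
`⟪x, R x⟫ - ⟪y, R y⟫ = ⟪x, R (x - y)⟫ + ⟪x - y, R y⟫` bounds the difference by
`2 ‖R‖ ‖x - y‖` when `‖x‖, ‖y‖ ≤ 1`. The `t`-th coordinates of `d_T(λ)` and `d_T(λ')`
differ by at most `t |λ - λ'| / √T`, and `∑_{t<T} t² ≤ T³/3` then gives
`‖d_T(λ) - d_T(λ')‖ ≤ T |λ - λ'| / √3`.
-/

open Complex Finset
open scoped InnerProductSpace

theorem norm_inner_map_self_sub_le {𝕜 E : Type*} [RCLike 𝕜] [SeminormedAddCommGroup E]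
    [InnerProductSpace 𝕜 E] (A : E →L[𝕜] E) (x y : E) :
    ‖⟪x, A x⟫_𝕜 - ⟪y, A y⟫_𝕜‖ ≤ ‖A‖ * (‖x‖ + ‖y‖) * ‖x - y‖ := by
  have hsplit : ⟪x, A x⟫_𝕜 - ⟪y, A y⟫_𝕜 = ⟪x, A (x - y)⟫_𝕜 + ⟪x - y, A y⟫_𝕜 := by
    rw [map_sub, inner_sub_right, inner_sub_left]
    ring
  rw [hsplit]
  calc ‖⟪x, A (x - y)⟫_𝕜 + ⟪x - y, A y⟫_𝕜‖
      ≤ ‖x‖ * ‖A (x - y)‖ + ‖x - y‖ * ‖A y‖ :=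
        (norm_add_le _ _).trans (add_le_add (norm_inner_le_norm _ _) (norm_inner_le_norm _ _))
    _ ≤ ‖x‖ * (‖A‖ * ‖x - y‖) + ‖x - y‖ * (‖A‖ * ‖y‖) := by
        gcongr <;> exact A.le_opNorm _
    _ = ‖A‖ * (‖x‖ + ‖y‖) * ‖x - y‖ := by ring

theorem star_dotProduct_mulVec_eq_inner_toEuclideanCLM {𝕜 n : Type*} [RCLike 𝕜] [Fintype n]
    [DecidableEq n] (A : Matrix n n 𝕜) (v : n → 𝕜) :
    star v ⬝ᵥ A *ᵥ v = ⟪WithLp.toLp 2 v, toEuclideanCLM (𝕜 := 𝕜) A (WithLp.toLp 2 v)⟫_𝕜 := by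
  rw [toEuclideanCLM_toLp, EuclideanSpace.inner_toLp_toLp, dotProduct_comm]

theorem norm_cexp_neg_I_mul_sub_le (c a b : ℝ) :
    ‖cexp (-(I * c * a)) - cexp (-(I * c * b))‖ ≤ |c| * |a - b| := by
  have hfactor : cexp (-(I * c * a)) - cexp (-(I * c * b))
      = cexp (I * ↑(-(c * b))) * (cexp (I * ↑(c * (b - a))) - 1) := by
    rw [mul_sub, ← Complex.exp_add, mul_one]
    push_cast
    ring_nf
  rw [hfactor, norm_mul, norm_exp_I_mul_ofReal, one_mul, ← abs_mul, ← abs_neg, neg_mul_eq_mul_neg,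
    neg_sub]
  exact Real.norm_exp_I_mul_ofReal_sub_one_le

theorem three_mul_sum_range_sq_le (n : ℕ) : 3 * ∑ t ∈ range n, t ^ 2 ≤ n ^ 3 := by
  induction n with
  | zero => simp
  | succ n ih =>
    rw [sum_range_succ, mul_add]
    linarith [show (n + 1) ^ 3 = n ^ 3 + 3 * n ^ 2 + 3 * n + 1 by ring]

theorem norm_dT_apply (T : ℕ) (a : ℝ) (t : Fin T) : ‖dT T a t‖ = (Real.sqrt T)⁻¹ := by
  rw [dT, norm_mul, Complex.norm_exp]
  simp

theorem norm_toLp_dT_le_one (T : ℕ) (a : ℝ) : ‖WithLp.toLp 2 (dT T a)‖ ≤ 1 := by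
  rw [EuclideanSpace.norm_eq, Real.sqrt_le_one]
  simp only [norm_dT_apply, inv_pow, Real.sq_sqrt (Nat.cast_nonneg T), sum_const, card_univ,
    Fintype.card_fin, nsmul_eq_mul]
  exact mul_inv_le_one

theorem norm_dT_sub_dT_apply_le (T : ℕ) (a b : ℝ) (t : Fin T) :
    ‖dT T a t - dT T b t‖ ≤ t * |a - b| / Real.sqrt T := by
  have hexp := norm_cexp_neg_I_mul_sub_le (t : ℕ) a b
  rw [Nat.abs_cast, ofReal_natCast] at hexp
  rw [dT, dT, ← mul_sub, norm_mul, one_div, norm_inv, Complex.norm_of_nonneg (Real.sqrt_nonneg _),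
    inv_mul_eq_div]
  gcongr

theorem norm_toLp_dT_sub_le (T : ℕ) (a b : ℝ) :
    ‖WithLp.toLp 2 (dT T a) - WithLp.toLp 2 (dT T b)‖ ≤ T / Real.sqrt 3 * |a - b| := by
  have hsq : 3 * ∑ t : Fin T, ((t : ℕ) : ℝ) ^ 2 ≤ (T : ℝ) ^ 3 := by
    rw [Fin.sum_univ_eq_sum_range (fun t => (t : ℝ) ^ 2)]
    exact_mod_cast three_mul_sum_range_sq_le T
  rw [← WithLp.toLp_sub, EuclideanSpace.norm_eq, Real.sqrt_le_iff]
  refine ⟨by positivity, ?_⟩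
  calc ∑ t, ‖(dT T a - dT T b) t‖ ^ 2
      ≤ ∑ t : Fin T, ((t : ℕ) * |a - b| / Real.sqrt T) ^ 2 := by
        gcongr with t
        exact norm_dT_sub_dT_apply_le T a b t
    _ = (a - b) ^ 2 / T * ∑ t : Fin T, ((t : ℕ) : ℝ) ^ 2 := by
        rw [mul_sum]
        refine sum_congr rfl fun t _ => ?_
        rw [div_pow, mul_pow, Real.sq_sqrt (Nat.cast_nonneg T), sq_abs]
        ring
    _ ≤ (a - b) ^ 2 / T * (T ^ 3 / 3) := by gcongr; linarith
    _ = (T / Real.sqrt 3 * |a - b|) ^ 2 := by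
        rw [mul_pow, div_pow, Real.sq_sqrt (by norm_num), sq_abs]
        rcases eq_or_ne (T : ℝ) 0 with hT | hT
        · simp [hT]
        · field_simp

theorem quadratic_form_dT_lipschitz_general
    (T : ℕ) (R : Matrix (Fin T) (Fin T) ℂ) (lam lam' : ℝ) :
    ‖star (dT T lam) ⬝ᵥ R *ᵥ dT T lam - star (dT T lam') ⬝ᵥ R *ᵥ dT T lam'‖
      ≤ (2 / Real.sqrt 3) * specNorm R * T * |lam - lam'| := by
  simp only [star_dotProduct_mulVec_eq_inner_toEuclideanCLM]
  calc _ ≤ specNorm R * (‖WithLp.toLp 2 (dT T lam)‖ + ‖WithLp.toLp 2 (dT T lam')‖)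
        * ‖WithLp.toLp 2 (dT T lam) - WithLp.toLp 2 (dT T lam')‖ :=
        norm_inner_map_self_sub_le _ _ _
    _ ≤ specNorm R * (1 + 1) * (T / Real.sqrt 3 * |lam - lam'|) := by
        have hR : 0 ≤ specNorm R := norm_nonneg _
        gcongr
        exacts [norm_toLp_dT_le_one T lam, norm_toLp_dT_le_one T lam',
          norm_toLp_dT_sub_le T lam lam']
    _ = (2 / Real.sqrt 3) * specNorm R * T * |lam - lam'| := by ring

/-- Lipschitz property of the quadratic form `λ ↦ d_T(λ)ᴴ R d_T(λ)` for a
Hermitian nonnegative definite matrix `R`: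
`|d_T(λ)ᴴ R d_T(λ) − d_T(λ′)ᴴ R d_T(λ′)| ≤ (2/√3) ‖R‖ T |λ − λ′|`. -/
theorem quadratic_form_dT_lipschitz
    (T : ℕ) (R : Matrix (Fin T) (Fin T) ℂ) (hR : R.PosSemidef) (lam lam' : ℝ) :
    ‖star (dT T lam) ⬝ᵥ R *ᵥ dT T lam - star (dT T lam') ⬝ᵥ R *ᵥ dT T lam'‖
      ≤ (2 / Real.sqrt 3) * specNorm R * T * |lam - lam'| :=
  quadratic_form_dT_lipschitz_general T R lam lam'
end

section
/- Let B_T = [T/(T − |i−j|)]_{0≤i,j≤T−1}. Then tr(B_T²) = T + 2T² ∑_{k=1}^{T−1} 1/k, and consequently the spectral norm satisfies ‖B_T‖² ≤ T + 2T² H_{T−1}, where H_{T−1} = ∑_{k=1}^{T−1} 1/k is the harmonic number; in particular ‖B_T‖ ≤ √2 · T (√(log T) + C) for some constant C > 0 independent of T. -/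
open Matrix

noncomputable section

/-- The matrix `B_T = [T/(T − |i−j|)]`. -/
def BT (T : ℕ) : Matrix (Fin T) (Fin T) ℂ :=
  Matrix.of fun i j => (T : ℂ) / ((((T : ℤ) - |(i : ℤ) - (j : ℤ)| : ℤ)) : ℂ)

end

section Aux

variable {M : Type*} [AddCommMonoid M]

/-- Counting lemma: a double sum of a function of `|i - j|` over `{0,…,T-1}²`. -/
lemma key_count (T : ℕ) (f : ℕ → M) :
    ∑ i ∈ Finset.range T, ∑ j ∈ Finset.range T, f ((i : ℤ) - (j : ℤ)).natAbs
      = T • f 0 + 2 • ∑ d ∈ Finset.Icc 1 (T - 1), (T - d) • f d := by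
  induction T with
  | zero => simp
  | succ T ih =>
    rw [Finset.sum_range_succ]
    have hrow : ∀ (n : ℕ), ∑ j ∈ Finset.range n, f ((n : ℤ) - (j : ℤ)).natAbs
        = ∑ d ∈ Finset.Icc 1 n, f d := by
      intro n
      have h1 : ∑ j ∈ Finset.range n, f ((n : ℤ) - (j : ℤ)).natAbs
          = ∑ j ∈ Finset.range n, f (n - j) := by
        refine Finset.sum_congr rfl fun j hj => ?_
        have hj' : j < n := Finset.mem_range.mp hj
        congr 1; omega
      have h2 : ∑ j ∈ Finset.range n, f (n - j) = ∑ j ∈ Finset.range n, f (j + 1) := by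
        rw [← Finset.sum_range_reflect]
        refine Finset.sum_congr rfl fun j hj => ?_
        have hj' : j < n := Finset.mem_range.mp hj
        congr 1; omega
      rw [h1, h2]
      have : Finset.Icc 1 n = Finset.Ico 1 (n+1) := by rw [Finset.Ico_add_one_right_eq_Icc]
      rw [this, Finset.sum_Ico_eq_sum_range]
      simp [add_comm]
    have hcol : ∑ i ∈ Finset.range T, f ((i : ℤ) - (T : ℤ)).natAbs
        = ∑ j ∈ Finset.range T, f ((T : ℤ) - (j : ℤ)).natAbs := by
      refine Finset.sum_congr rfl fun i _ => ?_
      congr 1; omega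
    have hsplit : ∀ i ∈ Finset.range T,
        (∑ j ∈ Finset.range (T+1), f ((i : ℤ) - (j : ℤ)).natAbs)
        = (∑ j ∈ Finset.range T, f ((i : ℤ) - (j : ℤ)).natAbs) + f ((i : ℤ) - (T : ℤ)).natAbs := by
      intro i _
      rw [Finset.sum_range_succ]
    rw [Finset.sum_congr rfl hsplit, Finset.sum_add_distrib, ih, hcol,
      Finset.sum_range_succ, hrow]
    simp only [sub_self, Int.natAbs_zero]
    have hA : ∑ d ∈ Finset.Icc 1 T, (T - d) • f d = ∑ d ∈ Finset.Icc 1 (T-1), (T - d) • f d := by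
      rcases Nat.eq_zero_or_pos T with h | h
      · subst h; simp
      · have : T = (T - 1) + 1 := by omega
        rw [this, Finset.sum_Icc_succ_top (by omega)]
        simp
    have hC : ∑ d ∈ Finset.Icc 1 (T+1-1), (T + 1 - d) • f d
        = ∑ d ∈ Finset.Icc 1 T, ((T - d) • f d + f d) := by
      simp only [Nat.add_sub_cancel]
      refine Finset.sum_congr rfl fun d hd => ?_
      rw [Finset.mem_Icc] at hd
      have : T + 1 - d = (T - d) + 1 := by omega
      rw [this, succ_nsmul]
    rw [hC, Finset.sum_add_distrib, hA]
    rw [add_nsmul, one_nsmul]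
    abel

/-- Evaluation of the counted sum for `f d = (T/(T-d))²`. -/
lemma key_eval {K : Type*} [Field K] [CharZero K] (T : ℕ) (hT : 0 < T) (f : ℕ → K)
    (hf : ∀ d, f d = ((T : K) / ((T : K) - (d : K))) ^ 2) :
    (T : ℕ) • f 0 + 2 • ∑ d ∈ Finset.Icc 1 (T - 1), (T - d) • f d
      = (T : K) + 2 * (T : K) ^ 2 * ∑ k ∈ Finset.Icc 1 (T - 1), (1 / (k : K)) := by
  have hT0 : (T : K) ≠ 0 := Nat.cast_ne_zero.mpr hT.ne'
  have h0 : f 0 = 1 := by rw [hf]; simp [div_self hT0]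
  have hterm : ∀ d ∈ Finset.Icc 1 (T - 1), (T - d) • f d = (T : K) ^ 2 / ((T - d : ℕ) : K) := by
    intro d hd
    rw [Finset.mem_Icc] at hd
    have hdT : d ≤ T := by omega
    have hc : ((T - d : ℕ) : K) = (T : K) - (d : K) := by push_cast [hdT]; ring
    have hcne : ((T - d : ℕ) : K) ≠ 0 := Nat.cast_ne_zero.mpr (by omega)
    rw [hf, nsmul_eq_mul, hc]
    rw [hc] at hcne
    field_simp
  rw [Finset.sum_congr rfl hterm, h0]
  have hre : ∑ d ∈ Finset.Icc 1 (T - 1), (T : K) ^ 2 / ((T - d : ℕ) : K)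
      = ∑ k ∈ Finset.Icc 1 (T - 1), (T : K) ^ 2 / (k : K) := by
    refine Finset.sum_nbij' (fun d => T - d) (fun k => T - k) ?_ ?_ ?_ ?_ ?_
    all_goals intro a ha
    · simp only [Finset.mem_Icc] at *; omega
    · simp only [Finset.mem_Icc] at *; omega
    · simp only [Finset.mem_Icc] at ha ⊢; omega
    · simp only [Finset.mem_Icc] at ha ⊢; omega
    · rfl
  rw [hre]
  simp only [nsmul_eq_mul, Nat.cast_ofNat, mul_one]
  rw [Finset.mul_sum, Finset.mul_sum]
  congr 1
  refine Finset.sum_congr rfl fun k hk => ?_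
  rw [div_eq_mul_one_div]
  ring

/-- Converting a `Fin`-indexed double sum to a `range`-indexed one. -/
lemma fin_to_range (T : ℕ) (f : ℕ → M) :
    ∑ i : Fin T, ∑ j : Fin T, f ((i : ℤ) - (j : ℤ)).natAbs
      = ∑ i ∈ Finset.range T, ∑ j ∈ Finset.range T, f ((i : ℤ) - (j : ℤ)).natAbs := by
  rw [Fin.sum_univ_eq_sum_range (fun i => ∑ j : Fin T, f ((i : ℤ) - (j : ℤ)).natAbs) T]
  exact Finset.sum_congr rfl fun i _ =>
    Fin.sum_univ_eq_sum_range (fun j => f ((i : ℤ) - (j : ℤ)).natAbs) T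

/-- The entries of `BT` in terms of `natAbs`. -/
lemma BT_entry_prod (T : ℕ) (i j : Fin T) :
    (BT T) i j * (BT T) j i = ((T:ℂ)/((T:ℂ) - ((((i : ℤ) - (j : ℤ)).natAbs : ℕ) : ℂ)))^2 := by
  have hji : ((j : ℤ) - (i : ℤ)).natAbs = ((i : ℤ) - (j : ℤ)).natAbs := by omega
  simp only [BT, Matrix.of_apply, Int.abs_eq_natAbs, hji, Int.cast_sub, Int.cast_natCast]
  ring

lemma BT_entry_norm_sq (T : ℕ) (i j : Fin T) :
    ‖(BT T) i j‖ ^ 2 = ((T:ℝ)/((T:ℝ) - ((((i : ℤ) - (j : ℤ)).natAbs : ℕ) : ℝ)))^2 := by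
  have hd : (((i : ℤ) - (j : ℤ)).natAbs : ℕ) < T := by
    have hi := i.isLt
    have hj := j.isLt
    omega
  have he : (BT T) i j
      = Complex.ofReal ((T:ℝ)/((T:ℝ) - ((((i : ℤ) - (j : ℤ)).natAbs : ℕ) : ℝ))) := by
    simp only [BT, Matrix.of_apply]
    have hzeq : (T : ℤ) - |(i : ℤ) - (j : ℤ)|
        = ((T - (((i : ℤ) - (j : ℤ)).natAbs : ℕ) : ℕ) : ℤ) := by
      rw [Int.abs_eq_natAbs]; omega
    have hr : (T:ℝ) - ((((i : ℤ) - (j : ℤ)).natAbs : ℕ) : ℝ)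
        = ((T - (((i : ℤ) - (j : ℤ)).natAbs : ℕ) : ℕ) : ℝ) := by
      rw [Nat.cast_sub hd.le]
    rw [hzeq, hr, Int.cast_natCast, Complex.ofReal_div, Complex.ofReal_natCast,
      Complex.ofReal_natCast]
  have hpos : (0:ℝ) ≤ (T:ℝ)/((T:ℝ) - ((((i : ℤ) - (j : ℤ)).natAbs : ℕ) : ℝ)) := by
    apply div_nonneg (Nat.cast_nonneg _)
    have : ((((i : ℤ) - (j : ℤ)).natAbs : ℕ) : ℝ) ≤ (T:ℝ) := by exact_mod_cast hd.le
    linarith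
  rw [he, Complex.norm_real, Real.norm_eq_abs, abs_of_nonneg hpos]

/-- Frobenius bound for the spectral norm. -/
lemma specNorm_sq_le {n : ℕ} (A : Matrix (Fin n) (Fin n) ℂ) :
    specNorm A ^ 2 ≤ ∑ i : Fin n, ∑ j : Fin n, ‖A i j‖ ^ 2 := by
  set S : ℝ := ∑ i : Fin n, ∑ j : Fin n, ‖A i j‖ ^ 2 with hS
  have hS0 : 0 ≤ S :=
    Finset.sum_nonneg fun i _ => Finset.sum_nonneg fun j _ => sq_nonneg _
  have hmain : specNorm A ≤ Real.sqrt S := by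
    refine ContinuousLinearMap.opNorm_le_bound _ (Real.sqrt_nonneg _) fun x => ?_
    have hx : ∀ i, (Matrix.toEuclideanCLM (𝕜 := ℂ) A x) i = A.mulVec x i := by
      intro i
      have := Matrix.ofLp_toEuclideanCLM (𝕜 := ℂ) A x
      exact congrFun this i
    have hxn : ‖Matrix.toEuclideanCLM (𝕜 := ℂ) A x‖ ^ 2 = ∑ i, ‖A.mulVec x i‖ ^ 2 := by
      rw [EuclideanSpace.norm_eq, Real.sq_sqrt (Finset.sum_nonneg fun i _ => sq_nonneg _)]
      exact Finset.sum_congr rfl fun i _ => by rw [hx]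
    have hxnorm : ‖x‖ ^ 2 = ∑ j, ‖x j‖ ^ 2 := by
      rw [EuclideanSpace.norm_eq, Real.sq_sqrt (Finset.sum_nonneg fun i _ => sq_nonneg _)]
    have hrow : ∀ i, ‖A.mulVec x i‖ ^ 2 ≤ (∑ j, ‖A i j‖ ^ 2) * ‖x‖ ^ 2 := by
      intro i
      have h1 : ‖A.mulVec x i‖ ≤ ∑ j, ‖A i j‖ * ‖x j‖ := by
        simp only [Matrix.mulVec, dotProduct]
        refine (norm_sum_le _ _).trans ?_
        exact le_of_eq (Finset.sum_congr rfl fun j _ => norm_mul _ _)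
      have h2 : (∑ j, ‖A i j‖ * ‖x j‖) ^ 2 ≤ (∑ j, ‖A i j‖ ^ 2) * (∑ j, ‖x j‖ ^ 2) :=
        Finset.sum_mul_sq_le_sq_mul_sq Finset.univ _ _
      calc ‖A.mulVec x i‖ ^ 2 ≤ (∑ j, ‖A i j‖ * ‖x j‖) ^ 2 := by
            exact pow_le_pow_left₀ (norm_nonneg _) h1 2
        _ ≤ (∑ j, ‖A i j‖ ^ 2) * (∑ j, ‖x j‖ ^ 2) := h2
        _ = (∑ j, ‖A i j‖ ^ 2) * ‖x‖ ^ 2 := by rw [hxnorm]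
    have hsq : ‖Matrix.toEuclideanCLM (𝕜 := ℂ) A x‖ ^ 2 ≤ S * ‖x‖ ^ 2 := by
      rw [hxn, hS, Finset.sum_mul]
      exact Finset.sum_le_sum fun i _ => hrow i
    calc ‖Matrix.toEuclideanCLM (𝕜 := ℂ) A x‖
        = Real.sqrt (‖Matrix.toEuclideanCLM (𝕜 := ℂ) A x‖ ^ 2) :=
          (Real.sqrt_sq (norm_nonneg _)).symm
      _ ≤ Real.sqrt (S * ‖x‖ ^ 2) := Real.sqrt_le_sqrt hsq
      _ = Real.sqrt S * ‖x‖ := by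
          rw [Real.sqrt_mul hS0, Real.sqrt_sq (norm_nonneg _)]
  calc specNorm A ^ 2 ≤ Real.sqrt S ^ 2 := by
        have h0 : (0:ℝ) ≤ specNorm A := norm_nonneg _
        exact pow_le_pow_left₀ h0 hmain 2
    _ = S := Real.sq_sqrt hS0

/-- Part 1. -/
lemma BT_trace (T : ℕ) : Matrix.trace (BT T * BT T) =
    (T : ℂ) + 2 * (T : ℂ) ^ 2 * ∑ k ∈ Finset.Icc 1 (T - 1), (1 / (k : ℂ)) := by
  rcases Nat.eq_zero_or_pos T with hT | hT
  · subst hT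
    simp [Matrix.trace]
  · set f : ℕ → ℂ := fun d => ((T : ℂ) / ((T : ℂ) - (d : ℂ))) ^ 2 with hf
    have htr : Matrix.trace (BT T * BT T)
        = ∑ i : Fin T, ∑ j : Fin T, f ((i : ℤ) - (j : ℤ)).natAbs := by
      simp only [Matrix.trace, Matrix.diag, Matrix.mul_apply]
      exact Finset.sum_congr rfl fun i _ => Finset.sum_congr rfl fun j _ =>
        BT_entry_prod T i j
    rw [htr, fin_to_range, key_count, key_eval T hT f (fun d => rfl)]

/-- Part 2. -/
lemma BT_norm_sq (T : ℕ) : specNorm (BT T) ^ 2 ≤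
    (T : ℝ) + 2 * (T : ℝ) ^ 2 * ∑ k ∈ Finset.Icc 1 (T - 1), (1 / (k : ℝ)) := by
  rcases Nat.eq_zero_or_pos T with hT | hT
  · subst hT
    have h := specNorm_sq_le (BT 0)
    simpa using h
  · set f : ℕ → ℝ := fun d => ((T : ℝ) / ((T : ℝ) - (d : ℝ))) ^ 2 with hf
    have h := specNorm_sq_le (BT T)
    have hsum : ∑ i : Fin T, ∑ j : Fin T, ‖(BT T) i j‖ ^ 2
        = ∑ i : Fin T, ∑ j : Fin T, f ((i : ℤ) - (j : ℤ)).natAbs :=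
      Finset.sum_congr rfl fun i _ => Finset.sum_congr rfl fun j _ =>
        BT_entry_norm_sq T i j
    rw [hsum, fin_to_range, key_count, key_eval T hT f (fun d => rfl)] at h
    exact h

end Aux

/-- `tr(B_T²) = T + 2T² H_{T−1}` with `H_{T−1} = ∑_{k=1}^{T−1} 1/k`;
consequently `‖B_T‖² ≤ T + 2T² H_{T−1}`, and there is a constant `C > 0` independent of `T`
with `‖B_T‖ ≤ √2 T(√(log T) + C)`. -/
theorem BT_trace_sq_and_norm :
    (∀ T : ℕ, Matrix.trace (BT T * BT T) =
        (T : ℂ) + 2 * (T : ℂ) ^ 2 * ∑ k ∈ Finset.Icc 1 (T - 1), (1 / (k : ℂ))) ∧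
    (∀ T : ℕ, specNorm (BT T) ^ 2 ≤
        (T : ℝ) + 2 * (T : ℝ) ^ 2 * ∑ k ∈ Finset.Icc 1 (T - 1), (1 / (k : ℝ))) ∧
    (∃ C : ℝ, 0 < C ∧ ∀ T : ℕ,
        specNorm (BT T) ≤ Real.sqrt 2 * T * (Real.sqrt (Real.log T) + C)) := by
  refine ⟨BT_trace, BT_norm_sq, ⟨2, by norm_num, fun T => ?_⟩⟩
  rcases Nat.eq_zero_or_pos T with hT | hT
  · subst hT
    have h := BT_norm_sq 0
    simp only [Nat.cast_zero] at h ⊢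
    have h0 : specNorm (BT 0) = 0 := by
      have hnn : (0:ℝ) ≤ specNorm (BT 0) := norm_nonneg _
      nlinarith [h]
    rw [h0]
    simp
  · have hT1 : (1:ℝ) ≤ (T:ℝ) := by exact_mod_cast hT
    set H : ℝ := ∑ k ∈ Finset.Icc 1 (T - 1), (1 / (k : ℝ)) with hH
    have h1 : specNorm (BT T) ^ 2 ≤ (T : ℝ) + 2 * (T : ℝ) ^ 2 * H := BT_norm_sq T
    have hHh : H = ((harmonic (T - 1) : ℚ) : ℝ) := by
      rw [hH, harmonic_eq_sum_Icc]
      push_cast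
      exact Finset.sum_congr rfl fun k _ => one_div _
    have h2 : H ≤ 1 + Real.log T := by
      rw [hHh]
      refine (harmonic_le_one_add_log (T - 1)).trans ?_
      have hlog2 : Real.log ((T - 1 : ℕ) : ℝ) ≤ Real.log (T : ℝ) := by
        rcases Nat.eq_zero_or_pos (T - 1) with h | h
        · rw [h]
          simpa using Real.log_nonneg hT1
        · exact Real.log_le_log (by exact_mod_cast h) (by exact_mod_cast Nat.sub_le T 1)
      linarith
    have hlog : 0 ≤ Real.log T := Real.log_nonneg hT1
    set L : ℝ := Real.sqrt (Real.log T) with hL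
    have hL0 : 0 ≤ L := Real.sqrt_nonneg _
    have hLsq : L ^ 2 = Real.log T := Real.sq_sqrt hlog
    have hRHS0 : 0 ≤ Real.sqrt 2 * T * (L + 2) := by
      have h2' := Real.sqrt_nonneg (2:ℝ)
      have hT0 : (0:ℝ) ≤ T := Nat.cast_nonneg _
      positivity
    have hRHSsq : (Real.sqrt 2 * T * (L + 2)) ^ 2 = 2 * (T:ℝ)^2 * (L + 2)^2 := by
      have h2' : Real.sqrt 2 ^ 2 = 2 := Real.sq_sqrt (by norm_num)
      rw [mul_pow, mul_pow, h2']
    have hfinal : specNorm (BT T) ^ 2 ≤ (Real.sqrt 2 * T * (L + 2)) ^ 2 := by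
      rw [hRHSsq]
      have hband : (T : ℝ) + 2 * (T : ℝ) ^ 2 * H ≤ 2 * (T:ℝ)^2 * (L + 2)^2 := by
        have hTsq : (T:ℝ) ≤ (T:ℝ)^2 := by nlinarith
        nlinarith [h2, hLsq, hL0, sq_nonneg ((T:ℝ) - 1), sq_nonneg L]
      linarith [h1]
    calc specNorm (BT T) = Real.sqrt (specNorm (BT T) ^ 2) :=
          (Real.sqrt_sq (norm_nonneg _)).symm
      _ ≤ Real.sqrt ((Real.sqrt 2 * T * (L + 2)) ^ 2) := Real.sqrt_le_sqrt hfinal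
      _ = Real.sqrt 2 * T * (L + 2) := Real.sqrt_sq hRHS0
end
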